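/- Let d ≥ 1 and let G1=(V1,E1) and G2=(V2,E2) be graphs with V1 ∩ V2 = {u,w}, E1 ∩ E2 = {uw} =: {e}, and suppose that r_d(Ei ∖ {e}) = r_d(Ei) for i = 1,2 (i.e., e is not a coloop of the rigidity matroid of Gi). Then a set C ⊆ E1 ∪ E2 is an R_d-circuit if and only if C is an R_d-circuit contained in E1, or C is an R_d-circuit contained in E2, or C = (C1 ∪ C2) ∖ {e} where, for i = 1,2, Ci is an R_d-circuit with e ∈ Ci ⊆ Ei. Consequently, a set C ⊆ (E1 ∪ E2) ∖ {e} is an R_d-circuit if and only if C is an R_d-circuit contained in E1 ∖ {e} or in E2 ∖ {e}, or C = (C1 ∪ C2) ∖ {e} with Ci as above. -/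

import Mathlib

open scoped BigOperators

/-- The row of the `d`-dimensional rigidity matrix of a realisation `p : V → ℝ^d`
indexed by the (unordered) edge `e`. -/
noncomputable def rigRow (d : ℕ) {V : Type*} [DecidableEq V]
    (p : V → Fin d → ℝ) (e : Sym2 V) : V × Fin d → ℝ :=
  Sym2.lift
    ⟨fun u v wi =>
        (((if wi.1 = u then (1 : ℝ) else 0) - (if wi.1 = v then (1 : ℝ) else 0)) *
          (p u wi.2 - p v wi.2)),
      fun u v => by funext wi; ring⟩ e

/-- A realisation is generic if the coordinates of the points form an algebraically
independent set over `ℚ`. -/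
def Generic (d : ℕ) {V : Type*} (p : V → Fin d → ℝ) : Prop :=
  AlgebraicIndependent ℚ fun vi : V × Fin d => p vi.1 vi.2

/-- `rrk d p F` : the rank of the set of rows of the rigidity matrix of `(K_V, p)`
indexed by the edges in `F`.  For generic `p` this is the rank function `r_d` of
the generic `d`-dimensional rigidity matroid. -/
noncomputable def rrk (d : ℕ) {V : Type*} [Fintype V] [DecidableEq V]
    (p : V → Fin d → ℝ) (F : Set (Sym2 V)) : ℕ :=
  Module.finrank ℝ (Submodule.span ℝ (rigRow d p '' F))

/-- `D` is a `k`-fold circuit (with respect to the realisation `p`) :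
`r (D \ {f}) = r D` for every `f ∈ D`, and `r D = |D| - k`. -/
def IsKFoldCircuit (d : ℕ) {V : Type*} [Fintype V] [DecidableEq V]
    (p : V → Fin d → ℝ) (D : Finset (Sym2 V)) (k : ℕ) : Prop :=
  (∀ f ∈ D, rrk d p (↑D \ {f}) = rrk d p ↑D) ∧ rrk d p ↑D + k = D.card

/-- An `R_d`-circuit: `r C = |C| - 1` and `r (C \ {f}) = r C` for all `f ∈ C`. -/
def IsCircuit (d : ℕ) {V : Type*} [Fintype V] [DecidableEq V]
    (p : V → Fin d → ℝ) (C : Finset (Sym2 V)) : Prop :=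
  IsKFoldCircuit d p C 1

/-- `A` is a part of the principal partition of the `k`-fold circuit `D`:
the parts are the sets `D \ B` where `B` runs over the `(k-1)`-fold circuits
contained in `D`. -/
def IsPrincipalPart (d : ℕ) {V : Type*} [Fintype V] [DecidableEq V]
    (p : V → Fin d → ℝ) (D : Finset (Sym2 V)) (k : ℕ) (A : Finset (Sym2 V)) : Prop :=
  ∃ B ⊆ D, IsKFoldCircuit d p B (k - 1) ∧ A = D \ B

/-- Closure in the rigidity matroid: all edges of `K_V` whose addition to `F`
does not increase the rank. -/
def rcl (d : ℕ) {V : Type*} [Fintype V] [DecidableEq V]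
    (p : V → Fin d → ℝ) (F : Set (Sym2 V)) : Set (Sym2 V) :=
  {e | ¬ e.IsDiag ∧ rrk d p (insert e F) = rrk d p F}

/-- A `k`-fold circuit `D` with principal partition `A_1, …, A_ℓ` is balanced if
`r_d (⋂ i, cl_d (D \ A_i)) = ℓ - k`. -/
def IsBalanced (d : ℕ) {V : Type*} [Fintype V] [DecidableEq V]
    (p : V → Fin d → ℝ) (D : Finset (Sym2 V)) (k : ℕ) : Prop :=
  rrk d p (⋂ A ∈ {A | IsPrincipalPart d p D k A}, rcl d p ↑(D \ A)) + k =
    Set.ncard {A | IsPrincipalPart d p D k A}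

/-- A vertex is monochromatic if all edges of `D` incident with it lie in a single
part of the principal partition (and technicolour otherwise). -/
def Monochromatic (d : ℕ) {V : Type*} [Fintype V] [DecidableEq V]
    (p : V → Fin d → ℝ) (D : Finset (Sym2 V)) (k : ℕ) (w : V) : Prop :=
  ∃ A, IsPrincipalPart d p D k A ∧ ∀ e ∈ D, w ∈ e → e ∈ A

/-- The graph `(W, E)` is `R_d`-rigid: it is a complete graph on at most `d+1`
vertices, or `r_d(E) = d|W| - (d+1 choose 2)`. -/
def IsRigidOn (d : ℕ) {V : Type*} [Fintype V] [DecidableEq V]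
    (p : V → Fin d → ℝ) (W : Finset V) (E : Finset (Sym2 V)) : Prop :=
  (W.card ≤ d + 1 ∧ ∀ u ∈ W, ∀ w ∈ W, u ≠ w → s(u, w) ∈ E) ∨
    (rrk d p ↑E : ℤ) + ((d + 1).choose 2 : ℤ) = (d : ℤ) * (W.card : ℤ)

/-- The edge set of the cone of (the graph with edge set) `D` over a new vertex,
realised as `none : Option V`. -/
def coneEdges {V : Type*} [Fintype V] [DecidableEq V] (D : Finset (Sym2 V)) :
    Finset (Sym2 (Option V)) :=
  D.image (Sym2.map Option.some) ∪
    Finset.univ.image fun u : V => s((Option.some u : Option V), (none : Option V))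

/-- The degree of the vertex `w` in the edge set `D`. -/
def degIn {V : Type*} [Fintype V] [DecidableEq V] (D : Finset (Sym2 V)) (w : V) : ℕ :=
  (D.filter fun e => w ∈ e).card

/-- The set of vertices incident with an edge of `F`. -/
def esupp {V : Type*} [Fintype V] [DecidableEq V] (F : Finset (Sym2 V)) : Finset V :=
  Finset.univ.filter fun w => ∃ e ∈ F, w ∈ e


/-!
A vector lying in the row spaces of both `E1` and `E2` vanishes away from `u` and `w`, and, like
every combination of rows, it is orthogonal to the infinitesimal translations and rotations; for
`p u ≠ p w` this forces it to be a multiple of the row of `uw`. Hence every linear dependency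
among the rows of `E1 ∪ E2` is the sum of a dependency on `E1` and one on `E2`, the two sharing
only the coefficient of `e = uw`. Circuits are the minimal supports of dependencies: splitting a
circuit that meets both sides yields a circuit through `e` on each side, and conversely two
circuits through `e`, combined so that their `e`-coefficients cancel, give a dependency with
support `(C1 ∪ C2) \ {e}`, minimal by the same splitting.
-/

open Module Submodule
open Finsupp (linearCombination)

section LinearCircuit

variable {K M ι : Type*} [Field K] [AddCommGroup M] [Module K M] {f : ι → M}

theorem finrank_span_image_le_card (f : ι → M) (C : Finset ι) :
    finrank K (span K (f '' C)) ≤ C.card := by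
  rw [Set.image_eq_range]
  simpa [Set.finrank] using finrank_range_le_card (R := K) fun x : (C : Set ι) => f x

theorem finrank_span_image_eq_card_iff {C : Finset ι} :
    finrank K (span K (f '' C)) = C.card ↔ LinearIndepOn K f (C : Set ι) := by
  rw [LinearIndepOn, linearIndependent_iff_card_eq_finrank_span, Set.finrank,
    ← Set.image_eq_range, eq_comm]
  simp only [Finset.coe_sort_coe, Fintype.card_coe]

theorem finrank_span_image_mono {s t : Set ι} (ht : t.Finite) (hst : s ⊆ t) :
    finrank K (span K (f '' s)) ≤ finrank K (span K (f '' t)) :=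
  have := FiniteDimensional.span_of_finite K (ht.image f)
  Submodule.finrank_mono (span_mono (Set.image_mono hst))

variable [DecidableEq ι]

variable (K) in
def IsLinearCircuit (f : ι → M) (C : Finset ι) : Prop :=
  ¬ LinearIndepOn K f (C : Set ι) ∧ ∀ g ∈ C, LinearIndepOn K f (C.erase g : Set ι)

variable {C C1 C2 E1 E2 : Finset ι} {e g : ι} {l l1 l2 : ι →₀ K}

theorem isLinearCircuit_iff_finrank :
    IsLinearCircuit K f C ↔
      (∀ g ∈ C, finrank K (span K (f '' (↑C \ {g}))) = finrank K (span K (f '' C))) ∧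
        finrank K (span K (f '' C)) + 1 = C.card := by
  have hle := finrank_span_image_le_card (K := K) f C
  have herase : ∀ g ∈ C, finrank K (span K (f '' (↑C \ {g}))) + 1 = C.card ↔
      LinearIndepOn K f ↑(C.erase g) := fun g hg => by
    rw [← finrank_span_image_eq_card_iff, Finset.coe_erase, ← Finset.card_erase_add_one hg]
    omega
  have hmono : ∀ g, finrank K (span K (f '' (↑C \ {g}))) ≤ finrank K (span K (f '' C)) :=
    fun g => finrank_span_image_mono C.finite_toSet Set.sdiff_subset
  rw [IsLinearCircuit, ← finrank_span_image_eq_card_iff]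
  constructor
  · rintro ⟨hdep, hind⟩
    obtain ⟨g, hg⟩ : C.Nonempty :=
      Finset.nonempty_iff_ne_empty.2 fun h => hdep (by subst h; simpa using hle)
    have hrank := fun g hg => (herase g hg).2 (hind g hg)
    have := hmono g
    have := hrank g hg
    refine ⟨fun g' hg' => ?_, by omega⟩
    have := hmono g'
    have := hrank g' hg'
    omega
  · rintro ⟨hrank, hcard⟩
    refine ⟨by omega, fun g hg => (herase g hg).1 ?_⟩
    rw [hrank g hg, hcard]

namespace IsLinearCircuit

theorem eq_zero_of_apply_eq_zero (hC : IsLinearCircuit K f C)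
    (hl : linearCombination K f l = 0) (hlC : l.support ⊆ C) (hg : g ∈ C)
    (hlg : l g = 0) : l = 0 :=
  linearIndepOn_iff.1 (hC.2 g hg) l
    ((Finsupp.mem_supported K l).2 <| Finset.coe_subset.2 fun _ hx =>
      Finset.mem_erase.2 ⟨fun h => Finsupp.mem_support_iff.1 hx (h ▸ hlg), hlC hx⟩) hl

theorem exists_support_eq (hC : IsLinearCircuit K f C) :
    ∃ l : ι →₀ K, linearCombination K f l = 0 ∧ l.support = C := by
  obtain ⟨l, hlC, hl, hl0⟩ : ∃ l ∈ Finsupp.supported K K (C : Set ι),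
      linearCombination K f l = 0 ∧ l ≠ 0 := by
    simpa [linearIndepOn_iff] using hC.1
  have hlC : l.support ⊆ C := Finset.coe_subset.1 ((Finsupp.mem_supported K l).1 hlC)
  refine ⟨l, hl, hlC.antisymm fun g hg => Finsupp.mem_support_iff.2 fun hlg => ?_⟩
  exact hl0 (hC.eq_zero_of_apply_eq_zero hl hlC hg hlg)

end IsLinearCircuit

theorem isLinearCircuit_support_of_linearIndepOn_erase (hl : linearCombination K f l = 0)
    (he : e ∈ l.support) (hind : LinearIndepOn K f ↑(l.support.erase e)) :
    IsLinearCircuit K f l.support := by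
  refine ⟨fun hdep => ?_, fun g hg => linearIndepOn_iff.2 fun m hm hmf => ?_⟩
  · have := linearIndepOn_iff.1 hdep l (Finsupp.mem_supported K l |>.2 subset_rfl) hl
    exact Finsupp.mem_support_iff.1 he (by simp [this])
  have hmg : m g = 0 := (Finsupp.mem_supported' K m).1 hm g (by simp)
  have hm_supp : ∀ x, l x = 0 → m x = 0 := fun x hx =>
    (Finsupp.mem_supported' K m).1 hm x (by simp [hx])
  -- Eliminating `e` from `m` with the help of `l` leaves a dependency on `l.support.erase e`.
  have hcomb : l e • m - m e • l = 0 := by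
    refine linearIndepOn_iff.1 hind _ ((Finsupp.mem_supported' K _).2 fun x hx => ?_)
      (by simp [hl, hmf])
    rcases eq_or_ne x e with rfl | hxe
    · simp [mul_comm]
    · have hlx : l x = 0 := by simpa [hxe] using hx
      simp [hlx, hm_supp x hlx]
  have hme : m e = 0 := by
    simpa [hmg, Finsupp.mem_support_iff.1 hg] using DFunLike.congr_fun hcomb g
  simpa [hme, Finsupp.mem_support_iff.1 he] using hcomb

theorem exists_add_eq_of_inf_span_le (he1 : e ∈ E1) (he2 : e ∈ E2)
    (hmod : span K (f '' E1) ⊓ span K (f '' E2) ≤ K ∙ f e)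
    (hl : linearCombination K f l = 0) (hlE : l.support ⊆ E1 ∪ E2) :
    ∃ l1 l2 : ι →₀ K, linearCombination K f l1 = 0 ∧
      linearCombination K f l2 = 0 ∧ l1.support ⊆ E1 ∧ l2.support ⊆ E2 ∧
      l1 + l2 = l := by
  have hl' : l ∈ Finsupp.supported K K (↑E1 ∪ ↑E2) :=
    (Finsupp.mem_supported K l).2 (by exact_mod_cast hlE)
  rw [Finsupp.supported_union] at hl'
  obtain ⟨a, ha, b, hb, rfl⟩ := Submodule.mem_sup.1 hl'
  have hab : linearCombination K f a = -linearCombination K f b :=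
    eq_neg_of_add_eq_zero_left (by rwa [← map_add])
  have hspan : ∀ {s : Set ι} {m : ι →₀ K}, m ∈ Finsupp.supported K K s →
      linearCombination K f m ∈ span K (f '' s) := fun hm =>
    Finsupp.span_image_eq_map_linearCombination (R := K) (v := f) _ ▸ mem_map_of_mem hm
  obtain ⟨c, hc⟩ := mem_span_singleton.1
    (hmod ⟨hspan ha, hab ▸ neg_mem (hspan hb)⟩)
  have hsupp : ∀ {s : Finset ι} {m : ι →₀ K}, m ∈ Finsupp.supported K K ↑s → m.support ⊆ s :=
    fun hm => Finset.coe_subset.1 ((Finsupp.mem_supported K _).1 hm)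
  refine ⟨a - Finsupp.single e c, b + Finsupp.single e c, ?_, ?_,
    hsupp (sub_mem ha (Finsupp.single_mem_supported K c he1)),
    hsupp (add_mem hb (Finsupp.single_mem_supported K c he2)), sub_add_add_cancel _ _ _⟩
  · simp [hc]
  · simp [← neg_eq_iff_eq_neg.2 hab, ← hc]

theorem apply_eq_zero_or_apply_eq_zero (hE : E1 ∩ E2 = {e}) (h1 : l1.support ⊆ E1)
    (h2 : l2.support ⊆ E2) {x : ι} (hx : x ≠ e) : l1 x = 0 ∨ l2 x = 0 := by
  by_contra! h
  exact hx (Finset.mem_singleton.1 (hE ▸ Finset.mem_inter.2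
    ⟨h1 (Finsupp.mem_support_iff.2 h.1), h2 (Finsupp.mem_support_iff.2 h.2)⟩))

theorem isLinearCircuit_support_left_of_add (hE : E1 ∩ E2 = {e})
    (hl1 : linearCombination K f l1 = 0) (h1 : l1.support ⊆ E1) (h2 : l2.support ⊆ E2)
    (hC : IsLinearCircuit K f (l1 + l2).support) (hC1 : ¬ (l1 + l2).support ⊆ E1)
    (hC2 : ¬ (l1 + l2).support ⊆ E2) :
    e ∈ l1.support ∧ e ∉ (l1 + l2).support ∧ IsLinearCircuit K f l1.support := by
  obtain ⟨g, hgC, hgE⟩ := Finset.not_subset.1 hC1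
  have hind := hC.2 g hgC
  have hzero : l1.support ⊆ (l1 + l2).support.erase g → l1 = 0 := fun h =>
    linearIndepOn_iff.1 hind l1 ((Finsupp.mem_supported K l1).2 (by exact_mod_cast h)) hl1
  have hsub : l1.support.erase e ⊆ (l1 + l2).support.erase g := by
    intro x hx
    obtain ⟨hxe, hx1⟩ := Finset.mem_erase.1 hx
    have hl2x : l2 x = 0 :=
      (apply_eq_zero_or_apply_eq_zero hE h1 h2 hxe).resolve_left (Finsupp.mem_support_iff.1 hx1)
    exact Finset.mem_erase.2 ⟨fun h => hgE (h ▸ h1 hx1), by simpa [hl2x] using hx1⟩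
  have he : e ∈ l1.support := by
    by_contra he
    rw [Finset.erase_eq_of_notMem he] at hsub
    exact hC2 (by simpa [hzero hsub] using h2)
  refine ⟨he, fun heC => ?_, isLinearCircuit_support_of_linearIndepOn_erase hl1 he
    (hind.mono (by exact_mod_cast hsub))⟩
  have hge : e ≠ g := fun h => hgE (h ▸ h1 he)
  have hl10 : l1 = 0 := hzero <| by
    rw [← Finset.insert_erase he]
    exact Finset.insert_subset (Finset.mem_erase.2 ⟨hge, heC⟩) hsub
  simp [hl10] at he

theorem IsLinearCircuit.exists_eq_erase_union (hE : E1 ∩ E2 = {e})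
    (hmod : span K (f '' E1) ⊓ span K (f '' E2) ≤ K ∙ f e) (hC : IsLinearCircuit K f C)
    (hCE : C ⊆ E1 ∪ E2) (hC1 : ¬ C ⊆ E1) (hC2 : ¬ C ⊆ E2) :
    ∃ C1 C2 : Finset ι, IsLinearCircuit K f C1 ∧ e ∈ C1 ∧ C1 ⊆ E1 ∧
      IsLinearCircuit K f C2 ∧ e ∈ C2 ∧ C2 ⊆ E2 ∧ C = (C1 ∪ C2).erase e := by
  have he : e ∈ E1 ∩ E2 := hE ▸ Finset.mem_singleton_self e
  obtain ⟨l, hl, rfl⟩ := hC.exists_support_eq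
  obtain ⟨l1, l2, hl1, hl2, h1, h2, rfl⟩ :=
    exists_add_eq_of_inf_span_le (Finset.mem_inter.1 he).1 (Finset.mem_inter.1 he).2 hmod hl hCE
  obtain ⟨he1, heC, hcirc1⟩ := isLinearCircuit_support_left_of_add hE hl1 h1 h2 hC hC1 hC2
  rw [add_comm] at hC hC1 hC2 heC ⊢
  obtain ⟨he2, -, hcirc2⟩ := isLinearCircuit_support_left_of_add (Finset.inter_comm E1 E2 ▸ hE)
    hl2 h2 h1 hC hC2 hC1
  refine ⟨l1.support, l2.support, hcirc1, he1, h1, hcirc2, he2, h2, ?_⟩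
  ext x
  rcases eq_or_ne x e with rfl | hxe
  · simpa using heC
  · rcases apply_eq_zero_or_apply_eq_zero hE h1 h2 hxe with h | h <;> simp [hxe, h]

theorem linearIndepOn_erase_erase_union (hE : E1 ∩ E2 = {e})
    (hmod : span K (f '' E1) ⊓ span K (f '' E2) ≤ K ∙ f e)
    (hC1 : IsLinearCircuit K f C1) (he1 : e ∈ C1) (hC1E : C1 ⊆ E1)
    (hC2 : IsLinearCircuit K f C2) (he2 : e ∈ C2) (hC2E : C2 ⊆ E2) (hg : g ∈ C1.erase e) :
    LinearIndepOn K f ↑(((C1 ∪ C2).erase e).erase g) := by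
  rw [linearIndepOn_iff]
  intro m hm hmf
  have hmC : m.support ⊆ ((C1 ∪ C2).erase e).erase g :=
    Finset.coe_subset.1 ((Finsupp.mem_supported K m).1 hm)
  obtain ⟨m1, m2, hm1, hm2, h1, h2, rfl⟩ :=
    exists_add_eq_of_inf_span_le (hC1E he1) (hC2E he2) hmod hmf
      (hmC.trans ((Finset.erase_subset _ _).trans ((Finset.erase_subset _ _).trans
        (Finset.union_subset_union hC1E hC2E))))
  have hmem : ∀ x, (m1 + m2) x ≠ 0 → x ≠ g ∧ x ≠ e ∧ (x ∈ C1 ∨ x ∈ C2) := fun x hx => by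
    simpa using hmC (Finsupp.mem_support_iff.2 hx)
  have hE12 : ∀ x ∈ E1, x ∈ E2 → x = e := fun x hx1 hx2 =>
    Finset.mem_singleton.1 (hE ▸ Finset.mem_inter.2 ⟨hx1, hx2⟩)
  have hm10 : m1 = 0 := by
    refine hC1.eq_zero_of_apply_eq_zero hm1 (fun x hx => ?_) (Finset.mem_of_mem_erase hg) ?_
    · rcases eq_or_ne x e with rfl | hxe
      · exact he1
      have hm2x := (apply_eq_zero_or_apply_eq_zero hE h1 h2 hxe).resolve_left
        (Finsupp.mem_support_iff.1 hx)
      obtain ⟨-, -, hx12⟩ := hmem x (by simpa [hm2x] using hx)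
      exact hx12.resolve_right fun hx2 => hxe (hE12 x (h1 hx) (hC2E hx2))
    · rcases apply_eq_zero_or_apply_eq_zero hE h1 h2 (Finset.ne_of_mem_erase hg) with h | h
      · exact h
      · by_contra hg1
        exact (hmem g (by simpa [h] using hg1)).1 rfl
  subst hm10
  simp only [zero_add] at *
  refine hC2.eq_zero_of_apply_eq_zero hm2 (fun x hx => ?_) he2 ?_
  · obtain ⟨-, hxe, hx12⟩ := hmem x (Finsupp.mem_support_iff.1 hx)
    exact hx12.resolve_left fun hx1 => hxe (hE12 x (hC1E hx1) (h2 hx))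
  · by_contra h
    exact (hmem e h).2.1 rfl

theorem isLinearCircuit_erase_union (hE : E1 ∩ E2 = {e}) (hfe : f e ≠ 0)
    (hmod : span K (f '' E1) ⊓ span K (f '' E2) ≤ K ∙ f e)
    (hC1 : IsLinearCircuit K f C1) (he1 : e ∈ C1) (hC1E : C1 ⊆ E1)
    (hC2 : IsLinearCircuit K f C2) (he2 : e ∈ C2) (hC2E : C2 ⊆ E2) :
    IsLinearCircuit K f ((C1 ∪ C2).erase e) := by
  refine ⟨fun hind => ?_, fun g hg => ?_⟩
  · obtain ⟨l1, hl1, rfl⟩ := hC1.exists_support_eq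
    obtain ⟨l2, hl2, rfl⟩ := hC2.exists_support_eq
    obtain ⟨g, hg1, hge⟩ : ∃ g ∈ l1.support, g ≠ e := by
      by_contra! h
      have : l1.support = {e} := Finset.eq_singleton_iff_unique_mem.2 ⟨he1, h⟩
      exact hC1.1 (by simpa [this, linearIndepOn_singleton_iff] using hfe)
    have hl2g : l2 g = 0 :=
      (apply_eq_zero_or_apply_eq_zero hE hC1E hC2E hge).resolve_left
        (Finsupp.mem_support_iff.1 hg1)
    -- The dependencies on the two circuits, scaled so that their `e`-coefficients cancel.
    have := linearIndepOn_iff.1 hind (l2 e • l1 - l1 e • l2)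
      ((Finsupp.mem_supported' K _).2 fun x hx => ?_) (by simp [hl1, hl2])
    · simpa [hl2g, Finsupp.mem_support_iff.1 hg1, Finsupp.mem_support_iff.1 he2]
        using DFunLike.congr_fun this g
    · rcases eq_or_ne x e with rfl | hxe
      · simp [mul_comm]
      · simp_all
  · rcases Finset.mem_union.1 (Finset.mem_of_mem_erase hg) with h | h
    · exact linearIndepOn_erase_erase_union hE hmod hC1 he1 hC1E hC2 he2 hC2E
        (Finset.mem_erase.2 ⟨Finset.ne_of_mem_erase hg, h⟩)
    · rw [Finset.union_comm]
      exact linearIndepOn_erase_erase_union (Finset.inter_comm E1 E2 ▸ hE)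
        (inf_comm (span K (f '' E1)) _ ▸ hmod) hC2 he2 hC2E hC1 he1 hC1E
        (Finset.mem_erase.2 ⟨Finset.ne_of_mem_erase hg, h⟩)

theorem isLinearCircuit_iff_of_inf_span_le (hE : E1 ∩ E2 = {e}) (hfe : f e ≠ 0)
    (hmod : span K (f '' E1) ⊓ span K (f '' E2) ≤ K ∙ f e) (hCE : C ⊆ E1 ∪ E2) :
    IsLinearCircuit K f C ↔
      (C ⊆ E1 ∧ IsLinearCircuit K f C) ∨ (C ⊆ E2 ∧ IsLinearCircuit K f C) ∨
        ∃ C1 C2 : Finset ι, IsLinearCircuit K f C1 ∧ e ∈ C1 ∧ C1 ⊆ E1 ∧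
          IsLinearCircuit K f C2 ∧ e ∈ C2 ∧ C2 ⊆ E2 ∧ C = (C1 ∪ C2).erase e := by
  refine ⟨fun hC => ?_, ?_⟩
  · by_cases hC1 : C ⊆ E1
    · exact Or.inl ⟨hC1, hC⟩
    by_cases hC2 : C ⊆ E2
    · exact Or.inr (Or.inl ⟨hC2, hC⟩)
    exact Or.inr (Or.inr (hC.exists_eq_erase_union hE hmod hCE hC1 hC2))
  · rintro (⟨-, hC⟩ | ⟨-, hC⟩ | ⟨C1, C2, hC1, he1, hC1E, hC2, he2, hC2E, rfl⟩)
    · exact hC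
    · exact hC
    · exact isLinearCircuit_erase_union hE hfe hmod hC1 he1 hC1E hC2 he2 hC2E

end LinearCircuit

section Rigidity

variable {d : ℕ} {V : Type*} [DecidableEq V] {p : V → Fin d → ℝ}

@[simp]
theorem rigRow_mk_apply (a b x : V) (i : Fin d) :
    rigRow d p s(a, b) (x, i) =
      ((if x = a then 1 else 0) - (if x = b then 1 else 0)) * (p a i - p b i) :=
  rfl

theorem rigRow_ne_zero {a b : V} (hab : p a ≠ p b) : rigRow d p s(a, b) ≠ 0 := by
  obtain ⟨i, hi⟩ := Function.ne_iff.1 hab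
  have hab' : a ≠ b := fun h => hab (h ▸ rfl)
  intro h
  simpa [hab', sub_eq_zero, hi] using congr_fun h (a, i)

theorem rigRow_apply_eq_zero_of_notMem {e : Sym2 V} {x : V} (hx : x ∉ e) (i : Fin d) :
    rigRow d p e (x, i) = 0 := by
  induction e using Sym2.ind with
  | h a b =>
    simp only [Sym2.mem_iff, not_or] at hx
    simp [hx.1, hx.2]

theorem apply_eq_zero_of_mem_span_rigRow {F : Set (Sym2 V)} {x : V} (hF : ∀ e ∈ F, x ∉ e)
    {v : V × Fin d → ℝ} (hv : v ∈ span ℝ (rigRow d p '' F)) (i : Fin d) : v (x, i) = 0 :=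
  LinearMap.eqOn_span' (f := LinearMap.proj (x, i)) (g := 0)
    (by rintro _ ⟨e, he, rfl⟩; exact rigRow_apply_eq_zero_of_notMem (hF e he) i) hv

variable [Fintype V]

theorem sum_rigRow_apply (e : Sym2 V) (i : Fin d) : ∑ x, rigRow d p e (x, i) = 0 := by
  induction e using Sym2.ind with
  | h a b => simp [sub_mul, Finset.sum_sub_distrib]

theorem sum_rigRow_apply_mul_comm (e : Sym2 V) (i j : Fin d) :
    ∑ x, rigRow d p e (x, i) * p x j = ∑ x, rigRow d p e (x, j) * p x i := by
  induction e using Sym2.ind with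
  | h a b =>
    simp only [rigRow_mk_apply, sub_mul, ite_mul, one_mul, zero_mul, Finset.sum_sub_distrib,
      Finset.sum_ite_eq', Finset.mem_univ, if_true]
    ring

theorem sum_apply_eq_zero_of_mem_span {v : V × Fin d → ℝ}
    (hv : v ∈ span ℝ (Set.range (rigRow d p))) (i : Fin d) : ∑ x, v (x, i) = 0 := by
  simpa using LinearMap.eqOn_span'
    (f := ∑ x, (LinearMap.proj (x, i) : (V × Fin d → ℝ) →ₗ[ℝ] ℝ)) (g := 0)
    (by rintro _ ⟨e, rfl⟩; simpa using sum_rigRow_apply (p := p) e i) hv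

theorem sum_apply_mul_comm_of_mem_span {v : V × Fin d → ℝ}
    (hv : v ∈ span ℝ (Set.range (rigRow d p))) (i j : Fin d) :
    ∑ x, v (x, i) * p x j = ∑ x, v (x, j) * p x i := by
  simpa [mul_comm] using LinearMap.eqOn_span'
    (f := ∑ x, p x j • (LinearMap.proj (x, i) : (V × Fin d → ℝ) →ₗ[ℝ] ℝ))
    (g := ∑ x, p x i • (LinearMap.proj (x, j) : (V × Fin d → ℝ) →ₗ[ℝ] ℝ))
    (by rintro _ ⟨e, rfl⟩; simpa [mul_comm] using sum_rigRow_apply_mul_comm (p := p) e i j) hv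

theorem mem_span_rigRow_of_apply_eq_zero {u w : V} (hpuw : p u ≠ p w) {v : V × Fin d → ℝ}
    (hv : v ∈ span ℝ (Set.range (rigRow d p)))
    (hvuw : ∀ x, x ≠ u → x ≠ w → ∀ i, v (x, i) = 0) : v ∈ ℝ ∙ rigRow d p s(u, w) := by
  have huw : u ≠ w := fun h => hpuw (h ▸ rfl)
  obtain ⟨k, hk⟩ := Function.ne_iff.1 hpuw
  have hk' : p u k - p w k ≠ 0 := sub_ne_zero.2 hk
  have hsum : ∀ g : V → ℝ, (∀ x, x ≠ u → x ≠ w → g x = 0) → ∑ x, g x = g u + g w :=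
    fun g hg => Fintype.sum_eq_add u w huw fun x hx => hg x hx.1 hx.2
  have hw : ∀ i, v (w, i) = -v (u, i) := fun i => by
    have := sum_apply_eq_zero_of_mem_span hv i
    rw [hsum _ fun x hxu hxw => hvuw x hxu hxw i] at this
    linarith
  have hu : ∀ i, v (u, i) * (p u k - p w k) = v (u, k) * (p u i - p w i) := fun i => by
    have := sum_apply_mul_comm_of_mem_span hv i k
    rw [hsum _ fun x hxu hxw => by simp [hvuw x hxu hxw], hsum _ fun x hxu hxw => by
      simp [hvuw x hxu hxw], hw, hw] at this
    linarith
  refine mem_span_singleton.2 ⟨v (u, k) / (p u k - p w k), funext fun ⟨x, i⟩ => ?_⟩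
  rcases eq_or_ne x u with rfl | hxu
  · simp only [Pi.smul_apply, rigRow_mk_apply, if_true, if_neg huw, smul_eq_mul]
    field_simp
    linarith [hu i]
  rcases eq_or_ne x w with rfl | hxw
  · simp only [Pi.smul_apply, rigRow_mk_apply, if_true, if_neg hxu, hw i, smul_eq_mul]
    field_simp
    linarith [hu i]
  · simp [hxu, hxw, hvuw x hxu hxw i]

theorem span_rigRow_inf_le {V1 V2 : Set V} {F1 F2 : Set (Sym2 V)} {u w : V}
    (hV : V1 ∩ V2 ⊆ {u, w}) (hF1 : ∀ e ∈ F1, ∀ x ∈ e, x ∈ V1) (hF2 : ∀ e ∈ F2, ∀ x ∈ e, x ∈ V2)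
    (hpuw : p u ≠ p w) :
    span ℝ (rigRow d p '' F1) ⊓ span ℝ (rigRow d p '' F2) ≤ ℝ ∙ rigRow d p s(u, w) := by
  rintro v ⟨hv1, hv2⟩
  refine mem_span_rigRow_of_apply_eq_zero hpuw
    (span_mono (Set.image_subset_range _ _) hv1) fun x hxu hxw => ?_
  by_cases hx : x ∈ V1
  · refine apply_eq_zero_of_mem_span_rigRow (fun e he hxe => ?_) hv2
    rcases hV ⟨hx, hF2 e he x hxe⟩ with h | h
    exacts [hxu h, hxw h]
  · exact apply_eq_zero_of_mem_span_rigRow (fun e he hxe => hx (hF1 e he x hxe)) hv1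

end Rigidity

theorem Generic.injective {d : ℕ} {V : Type*} {p : V → Fin d → ℝ} (hp : Generic d p)
    (hd : 0 < d) : Function.Injective p := fun a b h =>
  congrArg Prod.fst <|
    AlgebraicIndependent.injective hp (a₁ := (a, ⟨0, hd⟩)) (a₂ := (b, ⟨0, hd⟩)) (by simp [h])

theorem isCircuit_iff_isLinearCircuit {d : ℕ} {V : Type*} [Fintype V] [DecidableEq V]
    {p : V → Fin d → ℝ} {C : Finset (Sym2 V)} :
    IsCircuit d p C ↔ IsLinearCircuit ℝ (rigRow d p) C :=
  isLinearCircuit_iff_finrank.symm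

theorem rigidity_parallel_connection_circuits_general
    (d : ℕ) (hd : 1 ≤ d) {V : Type*} [Fintype V] [DecidableEq V]
    (V1 V2 : Finset V) (E1 E2 : Finset (Sym2 V)) (u w : V) (huw : u ≠ w)
    (hV12 : V1 ∩ V2 = {u, w})
    (hE1 : ∀ e ∈ E1, ¬ e.IsDiag ∧ ∀ x ∈ e, x ∈ V1)
    (hE2 : ∀ e ∈ E2, ¬ e.IsDiag ∧ ∀ x ∈ e, x ∈ V2)
    (hE12 : E1 ∩ E2 = {s(u, w)})
    (p : V → Fin d → ℝ) (hp : Generic d p) :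
    (∀ C : Finset (Sym2 V), C ⊆ E1 ∪ E2 →
      (IsCircuit d p C ↔
        (C ⊆ E1 ∧ IsCircuit d p C) ∨ (C ⊆ E2 ∧ IsCircuit d p C) ∨
        ∃ C1 C2 : Finset (Sym2 V), IsCircuit d p C1 ∧ s(u, w) ∈ C1 ∧ C1 ⊆ E1 ∧
          IsCircuit d p C2 ∧ s(u, w) ∈ C2 ∧ C2 ⊆ E2 ∧
          C = (C1 ∪ C2).erase (s(u, w)))) ∧
    (∀ C : Finset (Sym2 V), C ⊆ (E1 ∪ E2).erase (s(u, w)) →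
      (IsCircuit d p C ↔
        (C ⊆ E1.erase (s(u, w)) ∧ IsCircuit d p C) ∨
        (C ⊆ E2.erase (s(u, w)) ∧ IsCircuit d p C) ∨
        ∃ C1 C2 : Finset (Sym2 V), IsCircuit d p C1 ∧ s(u, w) ∈ C1 ∧ C1 ⊆ E1 ∧
          IsCircuit d p C2 ∧ s(u, w) ∈ C2 ∧ C2 ⊆ E2 ∧
          C = (C1 ∪ C2).erase (s(u, w)))) := by
  have hpuw : p u ≠ p w := (hp.injective hd).ne huw
  have hmod := span_rigRow_inf_le (F1 := ↑E1) (F2 := ↑E2)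
    (by rw [← Finset.coe_inter, hV12, Finset.coe_pair]) (fun e he => (hE1 e he).2)
    (fun e he => (hE2 e he).2) hpuw
  have key := fun C (hC : C ⊆ E1 ∪ E2) =>
    isLinearCircuit_iff_of_inf_span_le hE12 (rigRow_ne_zero hpuw) hmod hC
  simp only [isCircuit_iff_isLinearCircuit]
  refine ⟨key, fun C hC => ?_⟩
  rw [Finset.subset_erase] at hC
  simpa only [Finset.subset_erase, hC.2, not_false_eq_true, and_true] using key C hC.1

/-- Theorem 3.5: the circuits of the rigidity matroid of a graphical parallel
connection / 2-sum. -/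
theorem rigidity_parallel_connection_circuits
    (d : ℕ) (hd : 1 ≤ d) {V : Type*} [Fintype V] [DecidableEq V]
    (V1 V2 : Finset V) (E1 E2 : Finset (Sym2 V)) (u w : V) (huw : u ≠ w)
    (hV12 : V1 ∩ V2 = {u, w})
    (hE1 : ∀ e ∈ E1, ¬ e.IsDiag ∧ ∀ x ∈ e, x ∈ V1)
    (hE2 : ∀ e ∈ E2, ¬ e.IsDiag ∧ ∀ x ∈ e, x ∈ V2)
    (hE12 : E1 ∩ E2 = {s(u, w)})
    (p : V → Fin d → ℝ) (hp : Generic d p)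
    (hcoloop1 : rrk d p ↑(E1.erase (s(u, w))) = rrk d p ↑E1)
    (hcoloop2 : rrk d p ↑(E2.erase (s(u, w))) = rrk d p ↑E2) :
    (∀ C : Finset (Sym2 V), C ⊆ E1 ∪ E2 →
      (IsCircuit d p C ↔
        (C ⊆ E1 ∧ IsCircuit d p C) ∨ (C ⊆ E2 ∧ IsCircuit d p C) ∨
        ∃ C1 C2 : Finset (Sym2 V), IsCircuit d p C1 ∧ s(u, w) ∈ C1 ∧ C1 ⊆ E1 ∧
          IsCircuit d p C2 ∧ s(u, w) ∈ C2 ∧ C2 ⊆ E2 ∧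
          C = (C1 ∪ C2).erase (s(u, w)))) ∧
    (∀ C : Finset (Sym2 V), C ⊆ (E1 ∪ E2).erase (s(u, w)) →
      (IsCircuit d p C ↔
        (C ⊆ E1.erase (s(u, w)) ∧ IsCircuit d p C) ∨
        (C ⊆ E2.erase (s(u, w)) ∧ IsCircuit d p C) ∨
        ∃ C1 C2 : Finset (Sym2 V), IsCircuit d p C1 ∧ s(u, w) ∈ C1 ∧ C1 ⊆ E1 ∧
          IsCircuit d p C2 ∧ s(u, w) ∈ C2 ∧ C2 ⊆ E2 ∧
          C = (C1 ∪ C2).erase (s(u, w)))) :=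
  rigidity_parallel_connection_circuits_general d hd V1 V2 E1 E2 u w huw hV12 hE1 hE2 hE12 p hp
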